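/- arXiv:1707.00263 — 5 statements merged into one kernel-verified Lean document; each statement's English description precedes it below -/
import Mathlib

section
/- Let Θ = (π_1,…,π_d,π) be an isotopism and P a partial Latin hyper-rectangle with Θ as an autotopism. If (i_1,…,i_d) is in the domain of P with P(i_1,…,i_d) = s, then the tuple (l_{π_1,i_1}, …, l_{π_d,i_d}, l_{π,s}) is lcm-compatible, i.e., the lcm of any d of these d+1 cycle lengths equals the lcm of all d+1. -/
/-- A tuple of positive integers is lcm-compatible if removing any single entry
does not change the least common multiple. -/
def lcmCompatible {k : ℕ} (l : Fin k → ℕ) : Prop :=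
  ∀ j : Fin k, Finset.lcm (Finset.univ.erase j) l = Finset.lcm Finset.univ l

/-- A partial Latin hyper-rectangle: along each line each symbol occurs at most once. -/
def IsPLH {d n : ℕ} {nd : Fin d → ℕ} (P : (∀ j, Fin (nd j)) → Option (Fin n)) : Prop :=
  ∀ k : Fin d, ∀ i i' : ∀ j, Fin (nd j), (∀ j, j ≠ k → i j = i' j) →
    ∀ s, P i = some s → P i' = some s → i = i'

/-- `Θ = (π, σ)` is an autotopism of `P`: `P^Θ = P`, i.e.
`P(π_1 i_1, …, π_d i_d) = σ(P(i_1,…,i_d))` for all cells. -/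
def IsAutotopism {d n : ℕ} {nd : Fin d → ℕ} (π : ∀ j, Equiv.Perm (Fin (nd j)))
    (σ : Equiv.Perm (Fin n)) (P : (∀ j, Fin (nd j)) → Option (Fin n)) : Prop :=
  (fun x => Option.map σ (P fun j => (π j)⁻¹ (x j))) = P

/-- if `Θ = (π_1,…,π_d,σ)` is an autotopism of a partial Latin
hyper-rectangle `P` and `(i_1,…,i_d)` is a filled cell with symbol `s`, then the tuple
of cycle lengths `(l_{π_1,i_1},…,l_{π_d,i_d},l_{σ,s})` is lcm-compatible. -/
theorem stmt7 {d n : ℕ} {nd : Fin d → ℕ} (π : ∀ j, Equiv.Perm (Fin (nd j)))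
    (σ : Equiv.Perm (Fin n)) (P : (∀ j, Fin (nd j)) → Option (Fin n))
    (hP : IsPLH P) (hauto : IsAutotopism π σ P)
    (i : ∀ j, Fin (nd j)) (s : Fin n) (hi : P i = some s) :
    lcmCompatible (Fin.snoc (fun j => Function.minimalPeriod (⇑(π j)) (i j))
      (Function.minimalPeriod (⇑σ) s)) := by
  classical
  set l : Fin (d+1) → ℕ := Fin.snoc (fun j => Function.minimalPeriod (⇑(π j)) (i j))
      (Function.minimalPeriod (⇑σ) s) with hl
  have step : ∀ y : ∀ j, Fin (nd j),
      P (fun j => π j (y j)) = Option.map ⇑σ (P y) := by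
    intro y
    conv_lhs => rw [← hauto]
    simp
  have key : ∀ t (x : ∀ j, Fin (nd j)),
      P (fun j => (⇑(π j))^[t] (x j)) = Option.map ((⇑σ)^[t]) (P x) := by
    intro t
    induction t with
    | zero => intro x; simp
    | succ t ih =>
      intro x
      have h1 : (fun j => (⇑(π j))^[t+1] (x j)) = fun j => π j ((⇑(π j))^[t] (x j)) := by
        funext j; exact Function.iterate_succ_apply' _ _ _
      rw [h1, step, ih, Function.iterate_succ']
      cases P x <;> simp
  intro j0
  have main : l j0 ∣ Finset.lcm (Finset.univ.erase j0) l := by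
    induction j0 using Fin.lastCases with
    | last =>
      set M := Finset.lcm (Finset.univ.erase (Fin.last d)) l with hM
      have hfix : ∀ j, (⇑(π j))^[M] (i j) = i j := by
        intro j
        have hmem : (Fin.castSucc j) ∈ Finset.univ.erase (Fin.last d) :=
          Finset.mem_erase.2 ⟨ne_of_lt (Fin.castSucc_lt_last j), Finset.mem_univ _⟩
        have hdvd : Function.minimalPeriod (⇑(π j)) (i j) ∣ M := by
          have := Finset.dvd_lcm (f := l) hmem
          rwa [hl, Fin.snoc_castSucc] at this
        exact Function.isPeriodicPt_iff_minimalPeriod_dvd.2 hdvd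
      have hk := key M i
      have h2 : (fun j => (⇑(π j))^[M] (i j)) = i := funext hfix
      rw [h2, hi] at hk
      rw [Option.map_some] at hk
      have hss : (⇑σ)^[M] s = s := (Option.some_inj.1 hk).symm
      have hdvd2 : Function.minimalPeriod (⇑σ) s ∣ M :=
        Function.IsPeriodicPt.minimalPeriod_dvd hss
      rw [hl, Fin.snoc_last]
      exact hdvd2
    | cast k =>
      set M := Finset.lcm (Finset.univ.erase (Fin.castSucc k)) l with hM
      have hfix : ∀ j, j ≠ k → (⇑(π j))^[M] (i j) = i j := by
        intro j hj
        have hmem : (Fin.castSucc j) ∈ Finset.univ.erase (Fin.castSucc k) :=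
          Finset.mem_erase.2 ⟨fun h => hj (Fin.castSucc_injective d h), Finset.mem_univ _⟩
        have hdvd : Function.minimalPeriod (⇑(π j)) (i j) ∣ M := by
          have := Finset.dvd_lcm (f := l) hmem
          rwa [hl, Fin.snoc_castSucc] at this
        exact Function.isPeriodicPt_iff_minimalPeriod_dvd.2 hdvd
      have hss : (⇑σ)^[M] s = s := by
        have hmem : (Fin.last d) ∈ Finset.univ.erase (Fin.castSucc k) :=
          Finset.mem_erase.2 ⟨(Fin.castSucc_lt_last k).ne', Finset.mem_univ _⟩
        have hdvd : Function.minimalPeriod (⇑σ) s ∣ M := by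
          have := Finset.dvd_lcm (f := l) hmem
          rwa [hl, Fin.snoc_last] at this
        exact Function.isPeriodicPt_iff_minimalPeriod_dvd.2 hdvd
      have hk := key M i
      rw [hi] at hk
      have hPval : P (fun j => (⇑(π j))^[M] (i j)) = some s := by
        rw [hk, Option.map_some, hss]
      have heq := hP k (fun j => (⇑(π j))^[M] (i j)) i (fun j hj => hfix j hj) s hPval hi
      have hfk : (⇑(π k))^[M] (i k) = i k := congrFun heq k
      have hdvd2 : Function.minimalPeriod (⇑(π k)) (i k) ∣ M :=
        Function.IsPeriodicPt.minimalPeriod_dvd hfk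
      rw [hl, Fin.snoc_castSucc]
      exact hdvd2
  apply Nat.dvd_antisymm
  · exact Finset.lcm_dvd fun b _ => Finset.dvd_lcm (Finset.mem_univ b)
  · refine Finset.lcm_dvd fun b hb => ?_
    by_cases hb0 : b = j0
    · subst hb0; exact main
    · exact dvd_trans (Finset.dvd_lcm (Finset.mem_erase.2 ⟨hb0, Finset.mem_univ b⟩)) dvd_rfl
end

section
/- Let Θ = (π_1,…,π_d,π) be an isotopism with the property that the tuple of cycle lengths (l_{π_1,i_1},…,l_{π_d,i_d},l_{π,s}) is lcm-compatible for a given (i_1,…,i_d,s) ∈ [n_1]×…×[n_d]×[n]. Then the set of entries E = {(π_1^m(i_1),…,π_d^m(i_d),π^m(s)) : 1 ≤ m ≤ lcm(l_{π_1,i_1},…,l_{π_d,i_d},l_{π,s})} is the set of entries of a partial Latin hyper-rectangle that admits Θ as an autotopism. -/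
open Function

theorem Equiv.Perm.zpow_apply_eq_zpow_apply_iff {α : Type*} (f : Equiv.Perm α) (x : α)
    (a b : ℤ) : (f ^ a) x = (f ^ b) x ↔ (minimalPeriod f x : ℤ) ∣ b - a := by
  rw [show (minimalPeriod f x : ℤ) ∣ b - a ↔ (f ^ (b - a)) • x = x from
      (MulAction.zpow_smul_eq_iff_minimalPeriod_dvd (a := f) (b := x)).symm, Equiv.Perm.smul_def,
    show b = a + (b - a) by ring, zpow_add, Equiv.Perm.mul_apply, add_sub_cancel_left,
    Equiv.apply_eq_iff_eq, eq_comm]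

theorem Equiv.Perm.minimalPeriod_pos {α : Type*} [Finite α] (f : Equiv.Perm α) (x : α) :
    0 < minimalPeriod f x :=
  minimalPeriod_pos_of_mem_periodicPts (f.injective.mem_periodicPts x)

theorem Int.exists_natCast_modEq_of_pos {L : ℕ} (hL : 0 < L) (m : ℤ) :
    ∃ m' : ℕ, 1 ≤ m' ∧ m' ≤ L ∧ (m' : ℤ) ≡ m [ZMOD L] := by
  have h0 := Int.emod_nonneg (m - 1) (by omega : (L : ℤ) ≠ 0)
  have h1 := Int.emod_lt_of_pos (m - 1) (by omega : (0 : ℤ) < L)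
  refine ⟨((m - 1) % L).toNat + 1, by omega, by omega, ?_⟩
  push_cast [Int.toNat_of_nonneg h0]
  simpa using (Int.mod_modEq (m - 1) L).add_right 1

theorem lcmCompatible.dvd_of_forall_ne {k : ℕ} {l : Fin k → ℕ} (hl : lcmCompatible l)
    (j₀ : Fin k) {c : ℤ} (hc : ∀ j ≠ j₀, (l j : ℤ) ∣ c) : (l j₀ : ℤ) ∣ c := by
  simp only [Int.natCast_dvd] at hc ⊢
  exact (Finset.dvd_lcm (Finset.mem_univ j₀)).trans
    (hl j₀ ▸ Finset.lcm_dvd fun j hj => hc j (Finset.ne_of_mem_erase hj))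

section Graph

variable {α β : Type*}

open Classical in
noncomputable def partialFunOfGraph (E : Set (α × β)) (a : α) : Option β :=
  if h : ∃ b, (a, b) ∈ E then some h.choose else none

theorem partialFunOfGraph_eq_some_iff {E : Set (α × β)}
    (hE : ∀ a b b', (a, b) ∈ E → (a, b') ∈ E → b = b') {a : α} {b : β} :
    partialFunOfGraph E a = some b ↔ (a, b) ∈ E := by
  unfold partialFunOfGraph
  split_ifs with h
  · rw [Option.some_inj]
    exact ⟨fun hb => hb ▸ h.choose_spec, hE _ _ _ h.choose_spec⟩
  · simp only [false_iff]
    exact fun hb => h ⟨b, hb⟩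

end Graph

theorem isAutotopism_partialFunOfGraph {d n : ℕ} {nd : Fin d → ℕ}
    {π : ∀ j, Equiv.Perm (Fin (nd j))} {σ : Equiv.Perm (Fin n)}
    {E : Set ((∀ j, Fin (nd j)) × Fin n)} (hE : ∀ a b b', (a, b) ∈ E → (a, b') ∈ E → b = b')
    (hinv : ∀ i s, ((fun j => π j (i j)), σ s) ∈ E ↔ (i, s) ∈ E) :
    IsAutotopism π σ (partialFunOfGraph E) := by
  funext x
  apply Option.ext
  intro s
  simp only [Option.map_eq_some_iff, partialFunOfGraph_eq_some_iff hE]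
  constructor
  · rintro ⟨s', hs', rfl⟩
    simpa using (hinv _ s').2 hs'
  · intro hs
    exact ⟨σ⁻¹ s, (hinv _ _).1 (by simpa using hs), by simp⟩

section Orbit

variable {d : ℕ} {α : Fin d → Type*} {β : Type*}
  (π : ∀ j, Equiv.Perm (α j)) (σ : Equiv.Perm β) (i₀ : ∀ j, α j) (s₀ : β)

noncomputable def cyclePeriods : Fin (d + 1) → ℕ :=
  Fin.snoc (fun j => minimalPeriod (π j) (i₀ j)) (minimalPeriod σ s₀)

@[simp]
theorem cyclePeriods_castSucc (j : Fin d) :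
    cyclePeriods π σ i₀ s₀ j.castSucc = minimalPeriod (π j) (i₀ j) :=
  Fin.snoc_castSucc ..

@[simp]
theorem cyclePeriods_last : cyclePeriods π σ i₀ s₀ (Fin.last d) = minimalPeriod σ s₀ :=
  Fin.snoc_last ..

-- Integer exponents make the orbit closed under `Θ⁻¹` without any periodicity argument.
def orbitEntry (m : ℤ) : (∀ j, α j) × β :=
  (fun j => (π j ^ m) (i₀ j), (σ ^ m) s₀)

def orbitEntries : Set ((∀ j, α j) × β) :=
  Set.range (orbitEntry π σ i₀ s₀)

theorem lcm_cyclePeriods_pos [∀ j, Finite (α j)] [Finite β] :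
    0 < Finset.univ.lcm (cyclePeriods π σ i₀ s₀) := by
  refine Nat.pos_of_ne_zero fun h0 => ?_
  obtain ⟨j, -, hj⟩ := Finset.lcm_eq_zero_iff.1 h0
  cases j using Fin.lastCases with
  | last => exact (σ.minimalPeriod_pos s₀).ne' (by simpa using hj)
  | cast j => exact ((π j).minimalPeriod_pos (i₀ j)).ne' (by simpa using hj)

variable {π σ i₀ s₀}

theorem orbitEntry_natCast (m : ℕ) :
    orbitEntry π σ i₀ s₀ m = (fun j => (π j ^ m) (i₀ j), (σ ^ m) s₀) := by
  simp only [orbitEntry, zpow_natCast]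

theorem orbitEntry_add_one (m : ℤ) :
    orbitEntry π σ i₀ s₀ (m + 1) =
      (fun j => π j ((orbitEntry π σ i₀ s₀ m).1 j), σ (orbitEntry π σ i₀ s₀ m).2) := by
  rw [add_comm]
  simp only [orbitEntry, zpow_one_add, Equiv.Perm.mul_apply]

theorem orbitEntry_eq_of_modEq {a b : ℤ}
    (hab : a ≡ b [ZMOD (Finset.univ.lcm (cyclePeriods π σ i₀ s₀) : ℕ)]) :
    orbitEntry π σ i₀ s₀ a = orbitEntry π σ i₀ s₀ b := by
  have hdvd (j : Fin (d + 1)) : (cyclePeriods π σ i₀ s₀ j : ℤ) ∣ b - a :=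
    (Int.natCast_dvd_natCast.2 (Finset.dvd_lcm (Finset.mem_univ j))).trans hab.dvd
  refine Prod.ext (funext fun j => ?_) ?_
  · simpa [orbitEntry, Equiv.Perm.zpow_apply_eq_zpow_apply_iff] using hdvd j.castSucc
  · simpa [orbitEntry, Equiv.Perm.zpow_apply_eq_zpow_apply_iff] using hdvd (Fin.last d)

theorem orbitEntry_snd_eq_of_fst_eq (h : lcmCompatible (cyclePeriods π σ i₀ s₀)) {a b : ℤ}
    (hab : (orbitEntry π σ i₀ s₀ a).1 = (orbitEntry π σ i₀ s₀ b).1) :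
    (orbitEntry π σ i₀ s₀ a).2 = (orbitEntry π σ i₀ s₀ b).2 := by
  simp only [orbitEntry, funext_iff, Equiv.Perm.zpow_apply_eq_zpow_apply_iff] at hab ⊢
  simpa using h.dvd_of_forall_ne (Fin.last d) fun j hj => by
    obtain ⟨j, rfl⟩ := Fin.exists_castSucc_eq.2 hj
    simpa using hab j

theorem orbitEntry_fst_eq_of_forall_ne (h : lcmCompatible (cyclePeriods π σ i₀ s₀)) (k : Fin d)
    {a b : ℤ} (hrow : ∀ j ≠ k, (orbitEntry π σ i₀ s₀ a).1 j = (orbitEntry π σ i₀ s₀ b).1 j)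
    (hsym : (orbitEntry π σ i₀ s₀ a).2 = (orbitEntry π σ i₀ s₀ b).2) :
    (orbitEntry π σ i₀ s₀ a).1 = (orbitEntry π σ i₀ s₀ b).1 := by
  funext j
  rcases eq_or_ne j k with rfl | hjk
  · simp only [orbitEntry, Equiv.Perm.zpow_apply_eq_zpow_apply_iff] at hrow hsym ⊢
    simpa using h.dvd_of_forall_ne j.castSucc fun j' hj' => by
      cases j' using Fin.lastCases with
      | last => simpa using hsym
      | cast j' => simpa using hrow j' (by simpa using hj')
  · exact hrow j hjk

theorem orbitEntries_functional (h : lcmCompatible (cyclePeriods π σ i₀ s₀)) (i : ∀ j, α j)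
    (s s' : β) (hs : (i, s) ∈ orbitEntries π σ i₀ s₀) (hs' : (i, s') ∈ orbitEntries π σ i₀ s₀) :
    s = s' := by
  obtain ⟨a, ha⟩ := hs
  obtain ⟨b, hb⟩ := hs'
  simpa [ha, hb] using orbitEntry_snd_eq_of_fst_eq h (a := a) (b := b) (by simp [ha, hb])

theorem orbitEntries_latin (h : lcmCompatible (cyclePeriods π σ i₀ s₀)) (k : Fin d)
    {i i' : ∀ j, α j} {s : β} (hii' : ∀ j ≠ k, i j = i' j)
    (hs : (i, s) ∈ orbitEntries π σ i₀ s₀) (hs' : (i', s) ∈ orbitEntries π σ i₀ s₀) :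
    i = i' := by
  obtain ⟨a, ha⟩ := hs
  obtain ⟨b, hb⟩ := hs'
  simpa [ha, hb] using
    orbitEntry_fst_eq_of_forall_ne h k (a := a) (b := b) (by simpa [ha, hb]) (by simp [ha, hb])

theorem map_mem_orbitEntries_iff (i : ∀ j, α j) (s : β) :
    ((fun j => π j (i j)), σ s) ∈ orbitEntries π σ i₀ s₀ ↔ (i, s) ∈ orbitEntries π σ i₀ s₀ := by
  constructor
  · rintro ⟨m, hm⟩
    refine ⟨m - 1, ?_⟩
    have h := orbitEntry_add_one (π := π) (σ := σ) (i₀ := i₀) (s₀ := s₀) (m - 1)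
    simp only [sub_add_cancel, hm, Prod.ext_iff, funext_iff, Equiv.apply_eq_iff_eq] at h
    exact Prod.ext (funext fun j => (h.1 j).symm) h.2.symm
  · rintro ⟨m, hm⟩
    exact ⟨m + 1, by rw [orbitEntry_add_one, hm]⟩

theorem mem_orbitEntries_iff [∀ j, Finite (α j)] [Finite β] {i : ∀ j, α j} {s : β} :
    (i, s) ∈ orbitEntries π σ i₀ s₀ ↔
      ∃ m : ℕ, 1 ≤ m ∧ m ≤ Finset.univ.lcm (cyclePeriods π σ i₀ s₀) ∧
        (∀ j, (π j ^ m) (i₀ j) = i j) ∧ (σ ^ m) s₀ = s := by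
  constructor
  · rintro ⟨m, hm⟩
    obtain ⟨m', h1, hL, hmod⟩ := Int.exists_natCast_modEq_of_pos (lcm_cyclePeriods_pos π σ i₀ s₀) m
    have h := (orbitEntry_eq_of_modEq hmod).trans hm
    rw [orbitEntry_natCast, Prod.ext_iff, funext_iff] at h
    exact ⟨m', h1, hL, h⟩
  · rintro ⟨m, -, -, hi, hs⟩
    refine ⟨m, ?_⟩
    rw [orbitEntry_natCast, Prod.ext_iff, funext_iff]
    exact ⟨hi, hs⟩

end Orbit

/-- if the tuple of cycle lengths of `(i_1,…,i_d,s)` under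
`Θ = (π_1,…,π_d,σ)` is lcm-compatible, then
`{(π_1^m(i_1),…,π_d^m(i_d),σ^m(s)) : 1 ≤ m ≤ lcm}` is the set of entries of a
partial Latin hyper-rectangle admitting `Θ` as an autotopism. -/
theorem stmt8 {d n : ℕ} {nd : Fin d → ℕ} (π : ∀ j, Equiv.Perm (Fin (nd j)))
    (σ : Equiv.Perm (Fin n)) (i₀ : ∀ j, Fin (nd j)) (s₀ : Fin n)
    (h : lcmCompatible (Fin.snoc (fun j => Function.minimalPeriod (⇑(π j)) (i₀ j))
      (Function.minimalPeriod (⇑σ) s₀))) :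
    ∃ P : (∀ j, Fin (nd j)) → Option (Fin n), IsPLH P ∧ IsAutotopism π σ P ∧
      ∀ (i : ∀ j, Fin (nd j)) (s : Fin n), P i = some s ↔
        ∃ m : ℕ, 1 ≤ m ∧
          m ≤ Finset.lcm Finset.univ
            (Fin.snoc (fun j => Function.minimalPeriod (⇑(π j)) (i₀ j))
              (Function.minimalPeriod (⇑σ) s₀)) ∧
          (∀ j, ((π j) ^ m) (i₀ j) = i j) ∧ (σ ^ m) s₀ = s := by
  have hfun := orbitEntries_functional (π := π) (σ := σ) h
  refine ⟨partialFunOfGraph (orbitEntries π σ i₀ s₀), ?_,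
    isAutotopism_partialFunOfGraph hfun map_mem_orbitEntries_iff, fun i s => ?_⟩
  · intro k i i' hii' s hi hi'
    rw [partialFunOfGraph_eq_some_iff hfun] at hi hi'
    exact orbitEntries_latin h k hii' hi hi'
  · rw [partialFunOfGraph_eq_some_iff hfun]
    exact mem_orbitEntries_iff
end

section
/- Let G be a finite graph, X ∈ {A,B}, and let a, b, m be positive integers. If Alice has a winning strategy in the (a,b)-colouring game on G (with player X moving first) using k colours, then Alice has a winning strategy in the (ma+(m−1)b, b)-colouring game on G (with player X moving first) using k colours. Consequently the (ma+(m−1)b, b)-game chromatic number of G is at most the (a,b)-game chromatic number of G. -/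
variable {V : Type*} [Fintype V] [DecidableEq V]

/-- A partial colouring with palette `Fin k` is proper if adjacent vertices never
receive the same colour. -/
def ProperPartial {k : ℕ} (G : SimpleGraph V) (c : V → Option (Fin k)) : Prop :=
  ∀ v w, G.Adj v w → ∀ x, c v = some x → c w ≠ some x

/-- The number of uncoloured vertices. -/
def uncoloured {k : ℕ} (c : V → Option (Fin k)) : ℕ :=
  (Finset.univ.filter fun v => c v = none).card

/-- A single move: properly colour one previously uncoloured vertex. -/
def GMove {k : ℕ} (G : SimpleGraph V) (c c' : V → Option (Fin k)) : Prop :=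
  ∃ v x, c v = none ∧ c' = Function.update c v (some x) ∧ ProperPartial G c'

/-- A sequence of exactly `t` single moves. -/
def GMoveSeq {k : ℕ} (G : SimpleGraph V) :
    ℕ → (V → Option (Fin k)) → (V → Option (Fin k)) → Prop
  | 0, c, c' => c' = c
  | t + 1, c, c' => ∃ c'', GMove G c c'' ∧ GMoveSeq G t c'' c'

/-- A turn of a player who must colour `min t u` vertices, where `u` is the current
number of uncoloured vertices. -/
def GTurn {k : ℕ} (G : SimpleGraph V) (t : ℕ) (c c' : V → Option (Fin k)) : Prop :=
  GMoveSeq G (min t (uncoloured c)) c c'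

/-- `AliceWins G k a b turn c`: Alice has a winning strategy in the `(a,b)`-colouring
game on `G` with `k` colours from position `c`, where `turn = true` means it is
Alice's turn and `turn = false` means it is Bob's turn. Alice wins exactly when the
whole graph eventually gets coloured. -/
inductive AliceWins (G : SimpleGraph V) (k a b : ℕ) :
    Bool → (V → Option (Fin k)) → Prop
  | done (turn : Bool) (c : V → Option (Fin k)) :
      uncoloured c = 0 → AliceWins G k a b turn c
  | aliceTurn (c c' : V → Option (Fin k)) : 0 < uncoloured c → GTurn G a c c' →
      AliceWins G k a b false c' → AliceWins G k a b true c
  | bobTurn (c : V → Option (Fin k)) : 0 < uncoloured c →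
      (∃ c', GTurn G b c c') →
      (∀ c', GTurn G b c c' → AliceWins G k a b true c') →
      AliceWins G k a b false c

/-- The everywhere-uncoloured position. -/
def emptyCol (V : Type*) (k : ℕ) : V → Option (Fin k) := fun _ => none

section Aux

variable {k a b : ℕ} {G : SimpleGraph V}

lemma uncoloured_GMove {c c' : V → Option (Fin k)} (h : GMove G c c') :
    uncoloured c' + 1 = uncoloured c := by
  obtain ⟨v, x, hv, rfl, -⟩ := h
  unfold uncoloured
  have hset : (Finset.univ.filter fun w => Function.update c v (some x) w = none)
      = (Finset.univ.filter fun w => c w = none).erase v := by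
    ext w
    by_cases hw : w = v <;> simp [Function.update_apply, hw, hv]
  rw [hset, Finset.card_erase_of_mem (by simp [hv])]
  have : 0 < (Finset.univ.filter fun w => c w = none).card :=
    Finset.card_pos.2 ⟨v, by simp [hv]⟩
  omega

lemma uncoloured_GMoveSeq : ∀ {n : ℕ} {c c' : V → Option (Fin k)}, GMoveSeq G n c c' →
    uncoloured c' + n = uncoloured c := by
  intro n
  induction n with
  | zero => intro c c' h; obtain rfl : c' = c := h; rfl
  | succ t ih =>
      intro c c' h
      obtain ⟨c'', h1, h2⟩ := h
      have ha1 := uncoloured_GMove h1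
      have ha2 := ih h2
      omega

lemma ProperPartial_GMoveSeq : ∀ {n : ℕ} {c c' : V → Option (Fin k)}, GMoveSeq G n c c' →
    ProperPartial G c → ProperPartial G c' := by
  intro n
  induction n with
  | zero => intro c c' h hp; obtain rfl : c' = c := h; exact hp
  | succ t ih =>
      intro c c' h hp
      obtain ⟨c'', ⟨v, x, hv, rfl, hpp⟩, hs⟩ := h
      exact ih hs hpp

lemma GMoveSeq_append : ∀ {n s : ℕ} {c c1 c2 : V → Option (Fin k)},
    GMoveSeq G n c c1 → GMoveSeq G s c1 c2 → GMoveSeq G (n + s) c c2 := by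
  intro n
  induction n with
  | zero =>
      intro s c c1 c2 h1 h2
      obtain rfl : c1 = c := h1
      simpa using h2
  | succ t ih =>
      intro s c c1 c2 h1 h2
      obtain ⟨c'', hm, hs⟩ := h1
      have : GMoveSeq G (t + s + 1) c c2 := ⟨c'', hm, ih hs h2⟩
      have heq : t + 1 + s = t + s + 1 := by omega
      rwa [heq]

lemma GTurn_comp {t s : ℕ} {c c1 c2 : V → Option (Fin k)}
    (h1 : GTurn G t c c1) (h2 : GTurn G s c1 c2) : GTurn G (t + s) c c2 := by
  have hu : uncoloured c1 + min t (uncoloured c) = uncoloured c := uncoloured_GMoveSeq h1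
  have key : min t (uncoloured c) + min s (uncoloured c1) = min (t + s) (uncoloured c) := by
    omega
  unfold GTurn
  rw [← key]
  exact GMoveSeq_append h1 h2

lemma GTurn_of_zero {t : ℕ} {c : V → Option (Fin k)} (h : uncoloured c = 0) :
    GTurn G t c c := by
  unfold GTurn
  rw [h, Nat.min_zero]
  rfl

lemma step_alice {c : V → Option (Fin k)} (h : AliceWins G k a b true c) :
    ∃ c', GTurn G a c c' ∧ AliceWins G k a b false c' := by
  cases h with
  | done _ _ h0 => exact ⟨c, GTurn_of_zero h0, AliceWins.done _ _ h0⟩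
  | aliceTurn _ c' hpos ht hw => exact ⟨c', ht, hw⟩

lemma many_alice (j : ℕ) : ∀ {c : V → Option (Fin k)}, AliceWins G k a b true c →
    ∃ c', GTurn G (a + j * (a + b)) c c' ∧ AliceWins G k a b false c' := by
  induction j with
  | zero => intro c h; simpa using step_alice h
  | succ j ih =>
      intro c h
      obtain ⟨c1, h1, hw1⟩ := ih h
      cases hw1 with
      | done _ _ h0 =>
          refine ⟨c1, ?_, AliceWins.done _ _ h0⟩
          have hc := GTurn_comp h1 (GTurn_of_zero (t := a + b) h0)
          have heq : a + j * (a + b) + (a + b) = a + (j + 1) * (a + b) := by ring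
          rwa [heq] at hc
      | bobTurn _ hpos hex hall =>
          obtain ⟨c2, h2⟩ := hex
          obtain ⟨c3, h3, hw3⟩ := step_alice (hall c2 h2)
          refine ⟨c3, ?_, hw3⟩
          have hc := GTurn_comp (GTurn_comp h1 h2) h3
          have heq : a + j * (a + b) + b + a = a + (j + 1) * (a + b) := by ring
          rwa [heq] at hc

lemma transfer (ha : 1 ≤ a) (hb : 1 ≤ b) {m : ℕ} (hm : 1 ≤ m) :
    ∀ (n : ℕ) (c : V → Option (Fin k)) (turn : Bool), uncoloured c ≤ n →
      AliceWins G k a b turn c → AliceWins G k (m * a + (m - 1) * b) b turn c := by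
  obtain ⟨m', rfl⟩ : ∃ m', m = m' + 1 := ⟨m - 1, by omega⟩
  have heq : a + m' * (a + b) = (m' + 1) * a + (m' + 1 - 1) * b := by
    simp only [Nat.add_sub_cancel]
    ring
  have hA : 1 ≤ (m' + 1) * a + (m' + 1 - 1) * b := by
    have := Nat.mul_pos (Nat.succ_pos m') (show 0 < a by omega)
    omega
  intro n
  induction n with
  | zero => intro c turn h0 _; exact AliceWins.done _ _ (by omega)
  | succ n ih =>
      intro c turn hle hw
      by_cases h0 : uncoloured c = 0
      · exact AliceWins.done _ _ h0
      · cases turn with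
        | true =>
            obtain ⟨c', ht, hw'⟩ := many_alice m' hw
            rw [heq] at ht
            have hu : uncoloured c' +
                min ((m' + 1) * a + (m' + 1 - 1) * b) (uncoloured c) = uncoloured c :=
              uncoloured_GMoveSeq ht
            exact AliceWins.aliceTurn c c' (by omega) ht (ih c' false (by omega) hw')
        | false =>
            cases hw with
            | done _ _ hz => exact absurd hz h0
            | bobTurn _ hpos hex hall =>
                refine AliceWins.bobTurn c hpos hex (fun c' hc' => ?_)
                have hu : uncoloured c' + min b (uncoloured c) = uncoloured c :=
                  uncoloured_GMoveSeq hc'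
                exact ih c' true (by omega) (hall c' hc')

lemma exists_GMove {c : V → Option (Fin (Fintype.card V))} (hp : ProperPartial G c)
    (h0 : 0 < uncoloured c) : ∃ c', GMove G c c' := by
  classical
  obtain ⟨v, hvmem⟩ := Finset.card_pos.1 h0
  have hv : c v = none := (Finset.mem_filter.1 hvmem).2
  set N : Finset V := Finset.univ.filter fun w => G.Adj v w with hN
  have hNcard : N.card < Fintype.card V := by
    have hsub : N ⊆ Finset.univ.erase v := by
      intro w hw
      simp only [hN, Finset.mem_filter] at hw
      exact Finset.mem_erase.2 ⟨fun h => G.irrefl (h ▸ hw.2), Finset.mem_univ w⟩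
    calc N.card ≤ (Finset.univ.erase v).card := Finset.card_le_card hsub
      _ < Finset.univ.card := Finset.card_erase_lt_of_mem (Finset.mem_univ v)
      _ = Fintype.card V := rfl
  obtain ⟨x, hx⟩ : ∃ x : Fin (Fintype.card V), (some x : Option _) ∉ N.image c := by
    by_contra hcon
    push_neg at hcon
    have hsub : (Finset.univ.image fun x : Fin (Fintype.card V) => (some x : Option _))
        ⊆ N.image c := by
      intro o ho
      obtain ⟨x, -, rfl⟩ := Finset.mem_image.1 ho
      exact hcon x
    have h1 : Fintype.card V ≤ (N.image c).card := by
      have hc := Finset.card_le_card hsub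
      rwa [Finset.card_image_of_injective _ (Option.some_injective _), Finset.card_univ,
        Fintype.card_fin] at hc
    have h2 := Finset.card_image_le (s := N) (f := c)
    omega
  refine ⟨Function.update c v (some x), v, x, hv, rfl, ?_⟩
  intro p q hadj y hpy
  by_cases hpv : p = v
  · subst hpv
    have hqv : q ≠ p := fun h => G.irrefl (h ▸ hadj)
    rw [Function.update_of_ne hqv]
    rw [Function.update_self] at hpy
    obtain rfl : x = y := Option.some.inj hpy
    intro hq
    exact hx (Finset.mem_image.2 ⟨q, by simp [hN, hadj], hq⟩)
  · rw [Function.update_of_ne hpv] at hpy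
    by_cases hqv : q = v
    · subst hqv
      rw [Function.update_self]
      intro h
      obtain rfl : x = y := Option.some.inj h
      exact hx (Finset.mem_image.2 ⟨p, by simp [hN, hadj.symm], hpy⟩)
    · rw [Function.update_of_ne hqv]
      exact hp p q hadj y hpy

lemma exists_GMoveSeq : ∀ (n : ℕ) (c : V → Option (Fin (Fintype.card V))),
    ProperPartial G c → n ≤ uncoloured c → ∃ c', GMoveSeq G n c c' := by
  intro n
  induction n with
  | zero => exact fun c _ _ => ⟨c, rfl⟩
  | succ t ih =>
      intro c hp hle
      obtain ⟨c1, hm⟩ := exists_GMove hp (by omega)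
      have hu := uncoloured_GMove hm
      have hp1 : ProperPartial G c1 := by
        obtain ⟨_, _, _, _, h⟩ := hm
        exact h
      obtain ⟨c', hs⟩ := ih c1 hp1 (by omega)
      exact ⟨c', c1, hm, hs⟩

lemma exists_GTurn (t : ℕ) (c : V → Option (Fin (Fintype.card V)))
    (hp : ProperPartial G c) : ∃ c', GTurn G t c c' :=
  exists_GMoveSeq (min t (uncoloured c)) c hp (Nat.min_le_right _ _)

lemma alwaysWins {ta tb : ℕ} (hta : 1 ≤ ta) (htb : 1 ≤ tb) :
    ∀ (n : ℕ) (c : V → Option (Fin (Fintype.card V))) (turn : Bool),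
      uncoloured c ≤ n → ProperPartial G c →
      AliceWins G (Fintype.card V) ta tb turn c := by
  intro n
  induction n with
  | zero => intro c turn h _; exact AliceWins.done _ _ (by omega)
  | succ n ih =>
      intro c turn hle hp
      by_cases h0 : uncoloured c = 0
      · exact AliceWins.done _ _ h0
      · cases turn with
        | true =>
            obtain ⟨c', ht⟩ := exists_GTurn ta c hp
            have hu : uncoloured c' + min ta (uncoloured c) = uncoloured c :=
              uncoloured_GMoveSeq ht
            have hp' := ProperPartial_GMoveSeq ht hp
            exact AliceWins.aliceTurn c c' (by omega) ht (ih c' false (by omega) hp')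
        | false =>
            refine AliceWins.bobTurn c (by omega) (exists_GTurn tb c hp) (fun c' hc' => ?_)
            have hu : uncoloured c' + min tb (uncoloured c) = uncoloured c :=
              uncoloured_GMoveSeq hc'
            exact ih c' true (by omega) (ProperPartial_GMoveSeq hc' hp)

lemma emptyCol_proper (G : SimpleGraph V) (k : ℕ) : ProperPartial G (emptyCol V k) := by
  intro v w _ x hx
  simp [emptyCol] at hx

end Aux

/-- if Alice has a winning strategy with `k` colours in the
`(a,b)`-colouring game on a finite graph `G` (with either player moving first), then
she also has one in the `(m·a + (m−1)·b, b)`-colouring game with the same first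
player; consequently the `(m·a+(m−1)·b, b)`-game chromatic number of `G` is at most
its `(a,b)`-game chromatic number. -/
theorem stmt10 {V : Type*} [Fintype V] [DecidableEq V] (G : SimpleGraph V)
    (a b m : ℕ) (ha : 1 ≤ a) (hb : 1 ≤ b) (hm : 1 ≤ m) (first : Bool) :
    (∀ k : ℕ, AliceWins G k a b first (emptyCol V k) →
      AliceWins G k (m * a + (m - 1) * b) b first (emptyCol V k)) ∧
    sInf {k : ℕ | AliceWins G k (m * a + (m - 1) * b) b first (emptyCol V k)} ≤
      sInf {k : ℕ | AliceWins G k a b first (emptyCol V k)} := by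
  constructor
  · intro k h
    exact transfer ha hb hm (uncoloured (emptyCol V k)) _ first le_rfl h
  · refine csInf_le_csInf (OrderBot.bddBelow _) ?_ ?_
    · exact ⟨Fintype.card V,
        alwaysWins ha hb (uncoloured (emptyCol V (Fintype.card V))) _ first le_rfl
          (emptyCol_proper G _)⟩
    · intro k hk
      exact transfer ha hb hm (uncoloured (emptyCol V k)) _ first le_rfl hk
end

section
/- Let G = (V,E) be a finite graph with at least one edge, and let Δ be the maximum degree of the Cartesian product K_2 □ G. Then Alice has a winning strategy in the (1,1)-colouring game on K_2 □ G with Bob moving first, using Δ colours. In particular χ_{g_B}(K_2 □ G) ≤ Δ(K_2 □ G) = Δ(G) + 1. -/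
variable {V : Type*} [Fintype V] [DecidableEq V]

/-!
Alice keeps the position *mirrored*: whenever `(0, v)` has colour `x`, its partner `(1, v)` has
colour `x + 1`, and otherwise both are uncoloured. Bob can always move: the partner of an
uncoloured vertex is uncoloured, so it has at most `Δ(G) < Δ` coloured neighbours. When Bob
colours `(j, u)` with `y`, Alice colours the partner with the shifted colour. This differs from
`y`, and it cannot clash with a neighbour `(j', w)` on the partner's side: by the mirror property,
`(j, w)` would then have colour `y`, next to Bob's `y`. So the position is mirrored again and the
game ends with every vertex coloured.
-/

open SimpleGraph

section Moves

variable {W : Type*} {k : ℕ}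

lemma ProperPartial.update [DecidableEq W] {H : SimpleGraph W} {c : W → Option (Fin k)}
    (hc : ProperPartial H c) {p : W} {x : Fin k} (hx : ∀ w, H.Adj p w → c w ≠ some x) :
    ProperPartial H (Function.update c p (some x)) := by
  intro u w huw z hu
  rcases eq_or_ne u p with rfl | hup
  · rw [Function.update_self, Option.some_inj] at hu
    subst hu
    rw [Function.update_of_ne huw.ne']
    exact hx w huw
  · rw [Function.update_of_ne hup] at hu
    rcases eq_or_ne w p with rfl | hwp
    · rw [Function.update_self, Ne, Option.some_inj]
      rintro rfl
      exact hx u huw.symm hu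
    · rw [Function.update_of_ne hwp]
      exact hc u w huw z hu

lemma uncoloured_pos_of_eq_none [Fintype W] {c : W → Option (Fin k)} {p : W} (hp : c p = none) :
    0 < uncoloured c :=
  Finset.card_pos.2 ⟨p, by simpa using hp⟩

lemma uncoloured_update_lt [Fintype W] [DecidableEq W] {c : W → Option (Fin k)} {p : W}
    (hp : c p = none) (x : Fin k) :
    uncoloured (Function.update c p (some x)) < uncoloured c := by
  refine Finset.card_lt_card <|
    (Finset.ssubset_iff_of_subset ?_).2 ⟨p, by simpa using hp, by simp⟩
  intro w
  by_cases hwp : w = p <;> simp_all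

lemma GMove.uncoloured_pos [Fintype W] [DecidableEq W] {H : SimpleGraph W}
    {c c' : W → Option (Fin k)} (h : GMove H c c') :
    0 < uncoloured c :=
  let ⟨_, _, hp, _⟩ := h
  uncoloured_pos_of_eq_none hp

lemma gTurn_one_iff [Fintype W] [DecidableEq W] {H : SimpleGraph W} {c c' : W → Option (Fin k)}
    (hc : 0 < uncoloured c) :
    GTurn H 1 c c' ↔ GMove H c c' := by
  simp [GTurn, min_eq_left (show 1 ≤ uncoloured c from hc), GMoveSeq]

end Moves

lemma exists_colour_avoiding_neighbors {V : Type*} {k : ℕ} (G : SimpleGraph V) (v : V)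
    [Fintype (G.neighborSet v)] (hv : G.degree v < k) (f : V → Option (Fin k)) :
    ∃ x, ∀ w, G.Adj v w → f w ≠ some x := by
  classical
  obtain ⟨_, hx, hfx⟩ := Finset.exists_mem_notMem_of_card_lt_card
    (s := (G.neighborFinset v).image f) (t := Finset.univ.map .some)
    (by simpa using Finset.card_image_le.trans_lt hv)
  obtain ⟨x, -, rfl⟩ := Finset.mem_map.1 hx
  exact ⟨x, fun w hw hwx => hfx (Finset.mem_image.2 ⟨w, by simpa using hw, hwx⟩)⟩

lemma SimpleGraph.maxDegree_boxProd {α β : Type*} [Fintype α] [Fintype β] [Nonempty α]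
    [Nonempty β] (G : SimpleGraph α) (H : SimpleGraph β) [DecidableRel G.Adj]
    [DecidableRel H.Adj] [DecidableRel (G □ H).Adj] :
    (G □ H).maxDegree = G.maxDegree + H.maxDegree := by
  refine le_antisymm ((G □ H).maxDegree_le_of_forall_degree_le _ fun p => ?_) ?_
  · rw [degree_boxProd]
    exact add_le_add (G.degree_le_maxDegree _) (H.degree_le_maxDegree _)
  · obtain ⟨x, hx⟩ := G.exists_maximal_degree_vertex
    obtain ⟨y, hy⟩ := H.exists_maximal_degree_vertex
    have := (G □ H).degree_le_maxDegree (x, y)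
    rwa [degree_boxProd, ← hx, ← hy] at this

section Mirror

open Fin.NatCast

variable {V : Type*} {k : ℕ} [NeZero k]

/-- Side `0` is the paper's `+1`, side `1` its `-1`. -/
def mirror (f : V → Option (Fin k)) : Fin 2 × V → Option (Fin k) :=
  fun p => (f p.2).map (· + ((p.1 : ℕ) : Fin k))

@[simp]
lemma mirror_apply (f : V → Option (Fin k)) (i : Fin 2) (v : V) :
    mirror f (i, v) = (f v).map (· + ((i : ℕ) : Fin k)) :=
  rfl

lemma Fin.natCast_val_injective_of_le {n : ℕ} (hn : n ≤ k) :
    Function.Injective fun i : Fin n => ((i : ℕ) : Fin k) := by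
  intro i j hij
  have := congrArg Fin.val hij
  simp only [Fin.val_natCast, Nat.mod_eq_of_lt (i.2.trans_le hn),
    Nat.mod_eq_of_lt (j.2.trans_le hn)] at this
  exact Fin.ext this

lemma ProperPartial.mirror {G : SimpleGraph V} {f : V → Option (Fin k)} (hk : 1 < k)
    (hf : ProperPartial G f) : ProperPartial ((⊤ : SimpleGraph (Fin 2)) □ G) (mirror f) := by
  rintro ⟨i, v⟩ ⟨j, w⟩ hadj x hx hy
  obtain ⟨y, hfv, rfl⟩ := Option.map_eq_some_iff.1 hx
  obtain ⟨z, hfw, hzy⟩ := Option.map_eq_some_iff.1 hy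
  rcases boxProd_adj.1 hadj with ⟨hij, rfl⟩ | ⟨hvw, rfl⟩
  · rw [hfv, Option.some_inj] at hfw
    subst hfw
    exact hij (Fin.natCast_val_injective_of_le hk (add_left_cancel hzy).symm)
  · exact hf v w hvw y hfv (add_right_cancel hzy ▸ hfw)

lemma exists_gMove_mirror [Fintype V] [DecidableEq V] {G : SimpleGraph V} [DecidableRel G.Adj]
    {f : V → Option (Fin k)} (hk : 1 < k) (hf : ProperPartial G f) {v : V} (hv : f v = none)
    (hdeg : G.degree v < k) :
    ∃ c, GMove ((⊤ : SimpleGraph (Fin 2)) □ G) (mirror f) c := by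
  obtain ⟨x, hx⟩ := exists_colour_avoiding_neighbors G v hdeg f
  refine ⟨_, (0, v), x, by simp [hv], rfl, (hf.mirror hk).update ?_⟩
  rintro ⟨j, w⟩ hadj
  rcases boxProd_adj.1 hadj with ⟨-, rfl⟩ | ⟨hvw, rfl⟩
  · simp [hv]
  · simpa using hx w hvw

lemma exists_mirror_of_gMove [Fintype V] [DecidableEq V] {G : SimpleGraph V}
    {f : V → Option (Fin k)} (hk : 1 < k) (hf : ProperPartial G f)
    {c : Fin 2 × V → Option (Fin k)}
    (hc : GMove ((⊤ : SimpleGraph (Fin 2)) □ G) (mirror f) c) :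
    ∃ f', ProperPartial G f' ∧ uncoloured f' < uncoloured f ∧
      GMove ((⊤ : SimpleGraph (Fin 2)) □ G) c (mirror f') := by
  obtain ⟨⟨j, u⟩, y, hu, rfl, hc⟩ := hc
  have hfu : f u = none := by simpa using hu
  have hx : ∀ w, G.Adj u w → f w ≠ some (y - ((j : ℕ) : Fin k)) := fun w huw hw =>
    hc (j, u) (j, w) (boxProd_adj.2 (.inr ⟨huw, rfl⟩)) y (by simp)
      (by simp [Function.update_of_ne, huw.ne', hw])
  have hf' := hf.update hx
  refine ⟨_, hf', uncoloured_update_lt hfu _, (j.rev, u),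
    y - ((j : ℕ) : Fin k) + ((j.rev : ℕ) : Fin k), ?_, ?_, hf'.mirror hk⟩
  · fin_cases j <;> simp [hfu]
  · funext ⟨i, v⟩
    by_cases hvu : v = u
    · subst hvu
      fin_cases j <;> fin_cases i <;> simp
    · simp [Function.update_of_ne, hvu]

lemma aliceWins_mirror [Fintype V] [DecidableEq V] {G : SimpleGraph V} [DecidableRel G.Adj]
    (hk : 1 < k) (hdeg : ∀ v, G.degree v < k) (f : V → Option (Fin k))
    (hf : ProperPartial G f) :
    AliceWins ((⊤ : SimpleGraph (Fin 2)) □ G) k 1 1 false (mirror f) := by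
  induction hn : uncoloured f using Nat.strong_induction_on generalizing f with
  | _ n ih =>
  rcases (uncoloured (mirror f)).eq_zero_or_pos with h0 | hpos
  · exact .done _ _ h0
  obtain ⟨⟨i, v⟩, hv⟩ : ∃ p, mirror f p = none := by
    simpa [uncoloured, Finset.card_pos, Finset.filter_nonempty_iff] using hpos
  refine .bobTurn _ hpos ?_ fun c hc => ?_
  · simp_rw [gTurn_one_iff hpos]
    exact exists_gMove_mirror hk hf (by simpa using hv) (hdeg v)
  · obtain ⟨f', hf', hlt, hmove⟩ := exists_mirror_of_gMove hk hf ((gTurn_one_iff hpos).1 hc)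
    exact .aliceTurn _ _ hmove.uncoloured_pos ((gTurn_one_iff hmove.uncoloured_pos).2 hmove)
      (ih _ (hn ▸ hlt) f' hf' rfl)

end Mirror

open scoped Classical in
/-- let `G` be a finite graph with at least one edge and let
`Δ = Δ(K₂ □ G)` be the maximum degree of the Cartesian product `K₂ □ G`. Then Alice
has a winning strategy in the colouring game on `K₂ □ G` with Bob moving first using
`Δ` colours; in particular `χ_{g_B}(K₂ □ G) ≤ Δ(K₂ □ G) = Δ(G) + 1`. -/
theorem stmt11 {V : Type*} [Fintype V] [DecidableEq V] (G : SimpleGraph V)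
    [DecidableRel G.Adj] (hE : ∃ v w, G.Adj v w) :
    AliceWins ((⊤ : SimpleGraph (Fin 2)).boxProd G)
        (((⊤ : SimpleGraph (Fin 2)).boxProd G).maxDegree) 1 1 false
        (emptyCol (Fin 2 × V) (((⊤ : SimpleGraph (Fin 2)).boxProd G).maxDegree)) ∧
      ((⊤ : SimpleGraph (Fin 2)).boxProd G).maxDegree = G.maxDegree + 1 := by
  obtain ⟨v, w, hvw⟩ := hE
  have : Nonempty V := ⟨v⟩
  have hΔ : ((⊤ : SimpleGraph (Fin 2)) □ G).maxDegree = G.maxDegree + 1 := by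
    simp [maxDegree_boxProd, add_comm]
  refine ⟨?_, hΔ⟩
  have hG : 0 < G.maxDegree :=
    (G.degree_pos_iff_exists_adj v |>.2 ⟨w, hvw⟩).trans_le (G.degree_le_maxDegree v)
  rw [hΔ, show emptyCol (Fin 2 × V) (G.maxDegree + 1) = mirror fun _ => none by
    funext ⟨_, _⟩; simp [emptyCol]]
  exact aliceWins_mirror (by omega) (fun u => Nat.lt_succ_of_le (G.degree_le_maxDegree u)) _
    fun _ _ _ _ h => by simp at h
end

section
/- The game chromatic number of the rook's graph K_3 □ K_3 with Alice moving first equals 3; that is, Alice has a winning strategy in the (1,1)-colouring game on K_3 □ K_3 with 3 colours when she moves first. -/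
variable {V : Type*} [Fintype V] [DecidableEq V]

/-- The rook's graph `K₃ □ K₃` (the Hamming graph `H₃,₃`). -/
def rook33 : SimpleGraph (Fin 3 × Fin 3) :=
  (⊤ : SimpleGraph (Fin 3)).boxProd (⊤ : SimpleGraph (Fin 3))

/-!
A game that Alice wins ends in a proper colouring of the whole graph, since every move keeps the
partial colouring proper; with two colours this is impossible, as each row of `K₃ □ K₃` is a
triangle. With three colours Alice's win is a finite check: the game tree has about twenty
thousand nodes under a naive search, which a game-tree evaluator for the `(1,1)`-game, proved
sound against `AliceWins`, explores in the kernel.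
-/

section Game

variable {α : Type*} {G : SimpleGraph α} {k : ℕ} {c c' : α → Option (Fin k)}

lemma uncoloured_eq_zero_iff [Fintype α] : uncoloured c = 0 ↔ ∀ v, c v ≠ none := by
  simp [uncoloured, Finset.filter_eq_empty_iff]

lemma uncoloured_update_some [Fintype α] [DecidableEq α] {v : α} (hv : c v = none) (x : Fin k) :
    uncoloured (Function.update c v (some x)) = uncoloured c - 1 := by
  have hfilter : (Finset.univ.filter fun w => Function.update c v (some x) w = none)
      = (Finset.univ.filter fun w => c w = none).erase v := by
    ext w
    by_cases h : w = v <;> simp [h, Function.update_apply]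
  rw [uncoloured, hfilter, Finset.card_erase_of_mem (by simp [hv]), uncoloured]

lemma uncoloured_emptyCol [Fintype α] : uncoloured (emptyCol α k) = Fintype.card α := by
  simp [uncoloured, emptyCol]

lemma properPartial_emptyCol : ProperPartial G (emptyCol α k) := by
  simp [ProperPartial, emptyCol]

lemma properPartial_update_iff [DecidableEq α] (hc : ProperPartial G c) (v : α) (x : Fin k) :
    ProperPartial G (Function.update c v (some x)) ↔ ∀ w, G.Adj v w → c w ≠ some x := by
  refine ⟨fun h w hvw => ?_, fun h a b hab y hay hby => ?_⟩
  · simpa [Function.update_of_ne hvw.ne.symm] using h v w hvw x (by simp)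
  · rcases eq_or_ne a v with rfl | ha
    · simp only [Function.update_self, Option.some.injEq] at hay
      subst hay
      exact h b hab (by simpa [Function.update_of_ne hab.ne.symm] using hby)
    rcases eq_or_ne b v with rfl | hb
    · simp only [Function.update_self, Option.some.injEq] at hby
      subst hby
      exact h a hab.symm (by simpa [Function.update_of_ne ha] using hay)
    · exact hc a b hab y (by simpa [Function.update_of_ne ha] using hay)
        (by simpa [Function.update_of_ne hb] using hby)

lemma GMoveSeq.properPartial [DecidableEq α] {t : ℕ} (hc : ProperPartial G c)
    (h : GMoveSeq G t c c') : ProperPartial G c' := by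
  induction t generalizing c with
  | zero => exact (h : c' = c) ▸ hc
  | succ t ih =>
    obtain ⟨c'', ⟨_, _, _, _, hc''⟩, hseq⟩ := h
    exact ih hc'' hseq

lemma gTurn_one_iff_s13 [Fintype α] [DecidableEq α] (hu : 0 < uncoloured c) :
    GTurn G 1 c c' ↔ GMove G c c' := by
  rw [GTurn, Nat.min_eq_left hu]
  exact ⟨fun ⟨_, hm, he⟩ => (he : c' = _) ▸ hm, fun hm => ⟨c', hm, rfl⟩⟩

lemma colorable_of_properPartial [Fintype α] (hc : ProperPartial G c) (hu : uncoloured c = 0) :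
    G.Colorable k := by
  have hsome : ∀ v, (c v).isSome := fun v =>
    Option.isSome_iff_ne_none.2 (uncoloured_eq_zero_iff.1 hu v)
  refine ⟨SimpleGraph.Coloring.mk (fun v => (c v).get (hsome v)) fun {v w} hvw heq => ?_⟩
  exact hc v w hvw _ (Option.some_get _).symm (by rw [heq, Option.some_get])

theorem AliceWins.colorable [Fintype α] [DecidableEq α] {a b : ℕ} {turn : Bool}
    (h : AliceWins G k a b turn c) (hc : ProperPartial G c) : G.Colorable k := by
  induction h with
  | done _ c hu => exact colorable_of_properPartial hc hu
  | aliceTurn c c' _ hturn _ ih => exact ih (GMoveSeq.properPartial hc hturn)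
  | bobTurn c _ hex _ ih =>
    obtain ⟨c', hturn⟩ := hex
    exact ih c' hturn (GMoveSeq.properPartial hc hturn)

end Game

section Search

variable {α : Type*} [DecidableEq α] {k : ℕ} (vs : List α) (nbrs : α → List α)

def playable (c : α → Option (Fin k)) (v : α) (x : Fin k) : Bool :=
  c v == none && (nbrs v).all fun w => c w != some x

-- The fuel `f` is meant to be the number of uncoloured vertices, so at `0` the board is full.
def aliceWinsSearch : ℕ → Bool → (α → Option (Fin k)) → Bool
  | 0, _, _ => true
  | f + 1, true, c => vs.any fun v => (List.finRange k).any fun x =>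
      playable nbrs c v x && aliceWinsSearch f false (Function.update c v (some x))
  | f + 1, false, c =>
      (vs.any fun v => (List.finRange k).any fun x => playable nbrs c v x) &&
      vs.all fun v => (List.finRange k).all fun x =>
        !playable nbrs c v x || aliceWinsSearch f true (Function.update c v (some x))

variable {vs nbrs} {G : SimpleGraph α} {c c' : α → Option (Fin k)}

lemma playable_iff (hnbrs : ∀ v w, w ∈ nbrs v ↔ G.Adj v w) (hc : ProperPartial G c) (v : α)
    (x : Fin k) : playable nbrs c v x = true ↔
      c v = none ∧ ProperPartial G (Function.update c v (some x)) := by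
  simp [playable, properPartial_update_iff hc, hnbrs]

lemma gTurn_one_iff_playable [Fintype α] (hnbrs : ∀ v w, w ∈ nbrs v ↔ G.Adj v w)
    (hc : ProperPartial G c) (hu : 0 < uncoloured c) :
    GTurn G 1 c c' ↔ ∃ v x, playable nbrs c v x = true ∧ c' = Function.update c v (some x) := by
  simp only [gTurn_one_iff_s13 hu, GMove, playable_iff hnbrs hc]
  constructor
  · rintro ⟨v, x, hv, rfl, hp⟩
    exact ⟨v, x, ⟨hv, hp⟩, rfl⟩
  · rintro ⟨v, x, ⟨hv, hp⟩, rfl⟩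
    exact ⟨v, x, hv, rfl, hp⟩

theorem aliceWins_of_search [Fintype α] (hvs : ∀ v, v ∈ vs)
    (hnbrs : ∀ v w, w ∈ nbrs v ↔ G.Adj v w) {f : ℕ} {turn : Bool} (hc : ProperPartial G c)
    (hu : uncoloured c = f) (h : aliceWinsSearch vs nbrs f turn c = true) :
    AliceWins G k 1 1 turn c := by
  induction f generalizing turn c with
  | zero => exact .done turn c hu
  | succ f ih =>
    have hpos : 0 < uncoloured c := by omega
    have hnext : ∀ {v x}, playable nbrs c v x = true →
        ProperPartial G (Function.update c v (some x)) ∧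
          uncoloured (Function.update c v (some x)) = f := fun {v x} hp => by
      obtain ⟨hv, hp⟩ := (playable_iff hnbrs hc v x).1 hp
      exact ⟨hp, by rw [uncoloured_update_some hv, hu, Nat.add_sub_cancel]⟩
    cases turn with
    | true =>
      simp only [aliceWinsSearch, List.any_eq_true, Bool.and_eq_true] at h
      obtain ⟨v, -, x, -, hp, hwin⟩ := h
      exact .aliceTurn c _ hpos ((gTurn_one_iff_playable hnbrs hc hpos).2 ⟨v, x, hp, rfl⟩)
        (ih (hnext hp).1 (hnext hp).2 hwin)
    | false =>
      simp only [aliceWinsSearch, Bool.and_eq_true, List.any_eq_true, List.all_eq_true,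
        Bool.or_eq_true, Bool.not_eq_true'] at h
      obtain ⟨⟨v, -, x, -, hp⟩, hall⟩ := h
      refine .bobTurn c hpos ⟨_, (gTurn_one_iff_playable hnbrs hc hpos).2 ⟨v, x, hp, rfl⟩⟩
        fun c' hturn => ?_
      obtain ⟨v, x, hp, rfl⟩ := (gTurn_one_iff_playable hnbrs hc hpos).1 hturn
      have hwin := (hall v (hvs v) x (List.mem_finRange x)).resolve_left (by simp [hp])
      exact ih (hnext hp).1 (hnext hp).2 hwin

end Search

instance : DecidableRel rook33.Adj := fun _ _ => decidable_of_iff' _ SimpleGraph.boxProd_adj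

def rookNbrs (v : Fin 3 × Fin 3) : List (Fin 3 × Fin 3) :=
  [(v.1, v.2 + 1), (v.1, v.2 + 2), (v.1 + 1, v.2), (v.1 + 2, v.2)]

lemma mem_rookNbrs : ∀ v w, w ∈ rookNbrs v ↔ rook33.Adj v w := by
  decide

lemma rook33_not_colorable_two : ¬ rook33.Colorable 2 := fun h =>
  h.cliqueFree (by norm_num : 2 < 3) {(0, 0), (0, 1), (0, 2)}
    (SimpleGraph.is3Clique_triple_iff.2 (by decide))

/-- `χ_{g_A}(K₃ □ K₃) = 3`: Alice has a winning strategy with `3`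
colours in the colouring game on `K₃ □ K₃` with Alice moving first, and none with
`2` colours (indeed `χ(K₃ □ K₃) = 3`). -/
theorem stmt13 :
    AliceWins rook33 3 1 1 true (emptyCol (Fin 3 × Fin 3) 3) ∧
    ¬ AliceWins rook33 2 1 1 true (emptyCol (Fin 3 × Fin 3) 2) := by
  refine ⟨?_, fun h => rook33_not_colorable_two (h.colorable properPartial_emptyCol)⟩
  refine aliceWins_of_search (vs := List.finRange 3 ×ˢ List.finRange 3) (f := 9) (by simp)
    mem_rookNbrs properPartial_emptyCol (by simp [uncoloured_emptyCol]) ?_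
  decide +kernel
end
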